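/- If a state ρ on the doubled space violates strong superadditivity of f̂ (i.e., f̂(ρ) < f̂(ρ_I) + f̂(ρ_II)), and X₁ is optimal for ρ_I in f̂(ρ_I) = max_X (Tr[ρ_I X] - f*(X)) while X₂ is optimal for ρ_II, then Z = X₁ ⊠ I + I ⊠ X₂ violates subadditivity of the conjugate: f*(Z) > f*(X₁) + f*(X₂). -/

import Mathlib

open scoped Kronecker ComplexOrder

noncomputable section

variable {α β : Type*} [Fintype α] [DecidableEq α] [Fintype β] [DecidableEq β]

/-- A density operator: positive semidefinite with unit trace. -/
def IsState (ρ : Matrix α α ℂ) : Prop := ρ.PosSemidef ∧ ρ.trace = 1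

/-- A unit vector. -/
def UnitVector (ψ : α → ℂ) : Prop := ∑ i, Complex.normSq (ψ i) = 1

/-- Rank-one projector |ψ⟩⟨ψ|. -/
def proj (ψ : α → ℂ) : Matrix α α ℂ := Matrix.vecMulVec ψ (star ψ)

/-- Eigenvalues of a Hermitian matrix (junk value 0 otherwise). -/
def eigs (M : Matrix α α ℂ) : α → ℝ := if h : M.IsHermitian then h.eigenvalues else 0

/-- Von Neumann entropy S(ρ) = -Tr ρ log ρ (with 0 log 0 = 0). -/
def vnEntropy (ρ : Matrix α α ℂ) : ℝ := -∑ i, eigs ρ i * Real.log (eigs ρ i)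

/-- Functional calculus for Hermitian matrices (junk value 0 otherwise). -/
def mfun (g : ℝ → ℝ) (M : Matrix α α ℂ) : Matrix α α ℂ :=
  if h : M.IsHermitian then
    (h.eigenvectorUnitary : Matrix α α ℂ) * Matrix.diagonal (fun i => (g (h.eigenvalues i) : ℂ)) *
      star (h.eigenvectorUnitary : Matrix α α ℂ)
  else 0

/-- Matrix logarithm (spectral, with the convention log 0 = 0). -/
def mlog : Matrix α α ℂ → Matrix α α ℂ := mfun Real.log

/-- Matrix exponential (spectral). -/
def mexp : Matrix α α ℂ → Matrix α α ℂ := mfun Real.exp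

/-- Matrix real power (spectral). -/
def mpow (p : ℝ) : Matrix α α ℂ → Matrix α α ℂ := mfun (fun x => x ^ p)

/-- Maximal eigenvalue of a Hermitian matrix. -/
def lmax (M : Matrix α α ℂ) : ℝ := ⨆ i, eigs M i

/-- Schatten q-norm of a positive semidefinite matrix. -/
def schatten (q : ℝ) (M : Matrix α α ℂ) : ℝ := (∑ i, eigs M i ^ q) ^ (1/q)

/-- Partial trace over the first tensor factor. -/
def trA (ρ : Matrix (α × β) (α × β) ℂ) : Matrix β β ℂ := fun i j => ∑ k, ρ (k, i) (k, j)

/-- Partial trace over the second tensor factor. -/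
def trB (ρ : Matrix (α × β) (α × β) ℂ) : Matrix α α ℂ := fun i j => ∑ k, ρ (i, k) (j, k)

/-- The conjugate (Legendre-type transform) f*(X) = sup over states ρ of (Tr[ρX] - f ρ). -/
def conjF (f : Matrix α α ℂ → ℝ) (X : Matrix α α ℂ) : ℝ :=
  sSup {x | ∃ ρ, IsState ρ ∧ x = (ρ * X).trace.re - f ρ}

/-- The biconjugate / convex closure f̂(ρ) = sup over Hermitian X of (Tr[ρX] - f*(X)). -/
def cclF (f : Matrix α α ℂ → ℝ) (ρ : Matrix α α ℂ) : ℝ :=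
  sSup {x | ∃ X : Matrix α α ℂ, X.IsHermitian ∧ x = (ρ * X).trace.re - conjF f X}

/-- Boundedness of a function on the state space. -/
def BoundedOnStates (f : Matrix α α ℂ → ℝ) : Prop := ∃ C, ∀ ρ, IsState ρ → |f ρ| ≤ C

/-- Values of finite convex combinations Σ pᵢ f(ρᵢ) over ensembles realizing ρ. -/
def ensembleValues (f : Matrix α α ℂ → ℝ) (ρ : Matrix α α ℂ) : Set ℝ :=
  {x | ∃ (N : ℕ) (p : Fin N → ℝ) (σ : Fin N → Matrix α α ℂ),
      (∀ i, 0 ≤ p i) ∧ ∑ i, p i = 1 ∧ (∀ i, IsState (σ i)) ∧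
      ∑ i, p i • σ i = ρ ∧ x = ∑ i, p i * f (σ i)}

/-- Entanglement of formation of a bipartite state on H_A ⊗ H_B. -/
def EoF (ρ : Matrix (α × β) (α × β) ℂ) : ℝ :=
  sInf {x | ∃ (N : ℕ) (p : Fin N → ℝ) (ψ : Fin N → (α × β → ℂ)),
      (∀ i, 0 ≤ p i) ∧ ∑ i, p i = 1 ∧ (∀ i, UnitVector (ψ i)) ∧
      ∑ i, p i • proj (ψ i) = ρ ∧ x = ∑ i, p i * vnEntropy (trB (proj (ψ i)))}

/-- g(M) = max over unit ψ of (Tr[Ψ log M] - S(Tr_A Ψ)). -/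
def gFun (M : Matrix (α × β) (α × β) ℂ) : ℝ :=
  sSup {x | ∃ ψ : α × β → ℂ, UnitVector ψ ∧
      x = (proj ψ * mlog M).trace.re - vnEntropy (trA (proj ψ))}

end

section auxlemmas

variable {α β : Type*} [Fintype α] [DecidableEq α] [Fintype β] [DecidableEq β]

lemma state_entry_bound {σ : Matrix α α ℂ} (hσ : IsState σ) (i j : α) :
    ‖σ i j‖ ≤ 1 := by
  obtain ⟨B, hB⟩ : ∃ B : Matrix α α ℂ, σ = Matrix.conjTranspose B * B := by
    open MatrixOrder in
    exact CStarAlgebra.nonneg_iff_eq_star_mul_self.mp hσ.1.nonneg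
  have hentry : ∀ k l, σ k l = ∑ m, star (B m k) * B m l := by
    intro k l
    rw [hB]
    simp [Matrix.mul_apply, Matrix.conjTranspose_apply]
  have hdiag : ∀ k, (σ k k).re = ∑ m, Complex.normSq (B m k) := by
    intro k
    rw [hentry]
    rw [Complex.re_sum]
    congr 1; ext m
    simp [Complex.mul_re, Complex.normSq_apply]
  have hdiag_nonneg : ∀ k, 0 ≤ (σ k k).re := fun k => by
    rw [hdiag]; exact Finset.sum_nonneg fun m _ => Complex.normSq_nonneg _
  have htr : ∑ k, (σ k k).re = 1 := by
    have := hσ.2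
    have : σ.trace.re = 1 := by rw [this]; simp
    rw [← this]
    simp [Matrix.trace, Matrix.diag, Complex.re_sum]
  have hdle : ∀ k, (σ k k).re ≤ 1 := by
    intro k
    rw [← htr]
    exact Finset.single_le_sum (fun l _ => hdiag_nonneg l) (Finset.mem_univ k)
  have hcs : ‖σ i j‖ ^ 2 ≤ 1 := by
    have h1 : ‖σ i j‖ ≤ ∑ m, ‖B m i‖ * ‖B m j‖ := by
      rw [hentry]
      refine (norm_sum_le _ _).trans ?_
      apply Finset.sum_le_sum
      intro m _
      rw [norm_mul]
      simp
    have h2 : (∑ m, ‖B m i‖ * ‖B m j‖) ^ 2 ≤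
        (∑ m, ‖B m i‖ ^ 2) * ∑ m, ‖B m j‖ ^ 2 :=
      Finset.sum_mul_sq_le_sq_mul_sq _ _ _
    have h3 : (∑ m, ‖B m i‖ ^ 2) ≤ 1 := by
      have := hdle i
      rw [hdiag i] at this
      simpa [Complex.sq_norm] using this
    have h4 : (∑ m, ‖B m j‖ ^ 2) ≤ 1 := by
      have := hdle j
      rw [hdiag j] at this
      simpa [Complex.sq_norm] using this
    have hnn : (0:ℝ) ≤ ∑ m, ‖B m i‖ * ‖B m j‖ := by positivity
    calc ‖σ i j‖ ^ 2 ≤ (∑ m, ‖B m i‖ * ‖B m j‖) ^ 2 :=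
          pow_le_pow_left₀ (norm_nonneg _) h1 2
      _ ≤ (∑ m, ‖B m i‖ ^ 2) * ∑ m, ‖B m j‖ ^ 2 := h2
      _ ≤ 1 := by
          calc (∑ m, ‖B m i‖ ^ 2) * ∑ m, ‖B m j‖ ^ 2
              ≤ 1 * 1 := by
                apply mul_le_mul h3 h4 (by positivity) (by norm_num)
            _ = 1 := by norm_num
  nlinarith [norm_nonneg (σ i j)]

lemma trace_mul_re_bound (X : Matrix α α ℂ) {σ : Matrix α α ℂ} (hσ : IsState σ) :
    (σ * X).trace.re ≤ ∑ i, ∑ j, ‖X j i‖ := by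
  have h1 : (σ * X).trace = ∑ i, ∑ j, σ i j * X j i := by
    simp [Matrix.trace, Matrix.mul_apply, Matrix.diag]
  calc (σ * X).trace.re ≤ ‖(σ * X).trace‖ := Complex.re_le_norm _
    _ = ‖∑ i, ∑ j, σ i j * X j i‖ := by rw [h1]
    _ ≤ ∑ i, ∑ j, ‖σ i j * X j i‖ := by
        refine (norm_sum_le _ _).trans ?_
        exact Finset.sum_le_sum fun i _ => norm_sum_le _ _
    _ ≤ ∑ i, ∑ j, ‖X j i‖ := by
        refine Finset.sum_le_sum fun i _ => Finset.sum_le_sum fun j _ => ?_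
        rw [norm_mul]
        calc ‖σ i j‖ * ‖X j i‖
            ≤ 1 * ‖X j i‖ :=
              mul_le_mul_of_nonneg_right (state_entry_bound hσ i j) (norm_nonneg _)
          _ = ‖X j i‖ := one_mul _

lemma conjF_bddAbove (f : Matrix α α ℂ → ℝ) (hf : BoundedOnStates f) (X : Matrix α α ℂ) :
    BddAbove {x | ∃ ρ, IsState ρ ∧ x = (ρ * X).trace.re - f ρ} := by
  obtain ⟨C, hC⟩ := hf
  refine ⟨(∑ i, ∑ j, ‖X j i‖) + C, ?_⟩
  rintro x ⟨σ, hσ, rfl⟩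
  have h1 := trace_mul_re_bound X hσ
  have h2 := abs_le.mp (hC σ hσ)
  linarith [h2.1]

lemma le_conjF (f : Matrix α α ℂ → ℝ) (hf : BoundedOnStates f) (X : Matrix α α ℂ)
    {σ : Matrix α α ℂ} (hσ : IsState σ) : (σ * X).trace.re - f σ ≤ conjF f X :=
  le_csSup (conjF_bddAbove f hf X) ⟨σ, hσ, rfl⟩

lemma le_cclF (f : Matrix α α ℂ → ℝ) (hf : BoundedOnStates f) {ρ : Matrix α α ℂ}
    (hρ : IsState ρ) {X : Matrix α α ℂ} (hX : X.IsHermitian) :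
    (ρ * X).trace.re - conjF f X ≤ cclF f ρ := by
  refine le_csSup ?_ ⟨X, hX, rfl⟩
  obtain ⟨C, hC⟩ := hf
  refine ⟨C, ?_⟩
  rintro x ⟨Y, hY, rfl⟩
  have h1 := le_conjF f ⟨C, hC⟩ Y hρ
  have h2 := abs_le.mp (hC ρ hρ)
  linarith [h2.2]

open scoped Kronecker in
lemma kron_isHermitian {A : Matrix α α ℂ} {B : Matrix β β ℂ}
    (hA : A.IsHermitian) (hB : B.IsHermitian) : (A ⊗ₖ B).IsHermitian := by
  ext ⟨i, j⟩ ⟨k, l⟩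
  simp only [Matrix.conjTranspose_apply, Matrix.kroneckerMap_apply, star_mul']
  rw [← Matrix.conjTranspose_apply A, ← Matrix.conjTranspose_apply B, hA.eq, hB.eq]

open scoped Kronecker in
lemma trace_mul_kron_one (ρ : Matrix (α × β) (α × β) ℂ) (X : Matrix α α ℂ) :
    (ρ * (X ⊗ₖ (1 : Matrix β β ℂ))).trace = (trB ρ * X).trace := by
  simp only [Matrix.trace, Matrix.diag, Matrix.mul_apply, trB,
    Matrix.kroneckerMap_apply, Matrix.one_apply, Fintype.sum_prod_type,
    mul_ite, mul_one, mul_zero, Finset.sum_ite_eq', Finset.mem_univ, if_true, Finset.sum_mul]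
  exact Finset.sum_congr rfl fun i _ => Finset.sum_comm

open scoped Kronecker in
lemma trace_mul_one_kron (ρ : Matrix (α × β) (α × β) ℂ) (X : Matrix β β ℂ) :
    (ρ * ((1 : Matrix α α ℂ) ⊗ₖ X)).trace = (trA ρ * X).trace := by
  simp only [Matrix.trace, Matrix.diag, Matrix.mul_apply, trA,
    Matrix.kroneckerMap_apply, Matrix.one_apply, Fintype.sum_prod_type,
    mul_ite, mul_one, mul_zero, Finset.sum_ite_eq', Finset.mem_univ, if_true, Finset.sum_mul,
    ite_mul, one_mul, zero_mul]
  have collapse : ∀ (x : α) (x1 : β),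
      (∑ x2 : α, ∑ x3 : β, if x2 = x then ρ (x, x1) (x2, x3) * X x3 x1 else 0)
        = ∑ x3 : β, ρ (x, x1) (x, x3) * X x3 x1 := by
    intro x x1
    rw [Finset.sum_comm]
    simp
  simp only [collapse]
  rw [Finset.sum_comm]
  exact Finset.sum_congr rfl fun _ _ => Finset.sum_comm

end auxlemmas

/-- If a state ρ on the doubled space violates strong superadditivity of f̂,
and X₁ is optimal for ρ_I in f̂(ρ_I) = max_X (Tr[ρ_I X] - f*(X)) while X₂ is optimal for
ρ_II, then Z = X₁ ⊠ I + I ⊠ X₂ violates subadditivity of the conjugate: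
f*(Z) > f*(X₁) + f*(X₂). -/
theorem violation_transfer {n : ℕ} (hn : 0 < n)
    (f : Matrix (Fin n) (Fin n) ℂ → ℝ) (hf : BoundedOnStates f)
    (F : Matrix (Fin n × Fin n) (Fin n × Fin n) ℂ → ℝ) (hF : BoundedOnStates F)
    (ρ : Matrix (Fin n × Fin n) (Fin n × Fin n) ℂ) (hρ : IsState ρ)
    (hviol : cclF F ρ < cclF f (trB ρ) + cclF f (trA ρ))
    (X₁ X₂ : Matrix (Fin n) (Fin n) ℂ) (hX₁ : X₁.IsHermitian) (hX₂ : X₂.IsHermitian)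
    (hopt₁ : cclF f (trB ρ) = (trB ρ * X₁).trace.re - conjF f X₁)
    (hopt₂ : cclF f (trA ρ) = (trA ρ * X₂).trace.re - conjF f X₂) :
    conjF f X₁ + conjF f X₂ <
      conjF F (X₁ ⊗ₖ (1 : Matrix (Fin n) (Fin n) ℂ) + (1 : Matrix (Fin n) (Fin n) ℂ) ⊗ₖ X₂) := by
  set Z := X₁ ⊗ₖ (1 : Matrix (Fin n) (Fin n) ℂ) + (1 : Matrix (Fin n) (Fin n) ℂ) ⊗ₖ X₂ with hZdef
  have hZ : Z.IsHermitian :=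
    (kron_isHermitian hX₁ Matrix.isHermitian_one).add
      (kron_isHermitian Matrix.isHermitian_one hX₂)
  have htr : (ρ * Z).trace.re = (trB ρ * X₁).trace.re + (trA ρ * X₂).trace.re := by
    rw [hZdef, Matrix.mul_add, Matrix.trace_add, trace_mul_kron_one, trace_mul_one_kron,
      Complex.add_re]
  have h1 : (ρ * Z).trace.re - conjF F Z ≤ cclF F ρ := le_cclF F hF hρ hZ
  linarith [htr, hopt₁, hopt₂, hviol, h1]
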